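/- If h < m, then there exists an integer i with m − h ≤ i ≤ m such that h·p_{(i)} ≤ (i − m + h + 1)·α; in particular the quantity z = min{m−h ≤ i ≤ m : h·p_{(i)} ≤ (i−m+h+1)·α} is well defined whenever h < m. -/

import Mathlib

open Finset

attribute [local instance] Classical.propDecidable

/-- The `i`-th smallest (1-indexed) element of the multiset of p-values `{p_j : j ∈ I}`. -/
noncomputable def pOrd {m : ℕ} (p : Fin m → ℝ) (I : Finset (Fin m)) (i : ℕ) : ℝ :=
  ((I.val.map p).sort (· ≤ ·)).getD (i - 1) 0

/-- The Simes local test rejects `H_I` (written `I ∈ 𝒰`) iff `I` is nonempty and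
`|I|·p_{(i:I)} ≤ i·α` for at least one `1 ≤ i ≤ |I|`. -/
def SimesU {m : ℕ} (α : ℝ) (p : Fin m → ℝ) (I : Finset (Fin m)) : Prop :=
  ∃ i, 1 ≤ i ∧ i ≤ I.card ∧ (I.card : ℝ) * pOrd p I i ≤ (i : ℝ) * α

/-- Closed testing rejects `H_I` (written `I ∈ 𝒳`) iff `J ∈ 𝒰` for every `J ⊇ I`. -/
def ClosedX {m : ℕ} (α : ℝ) (p : Fin m → ℝ) (I : Finset (Fin m)) : Prop :=
  ∀ J, I ⊆ J → SimesU α p J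

/-- `K_i = {r_{m−i+1},…,r_m}`: the `i` indices with largest p-values. -/
def Kset {m : ℕ} (r : Fin m → Fin m) (i : ℕ) : Finset (Fin m) :=
  (Finset.univ.filter fun j : Fin m => m - i ≤ (j : ℕ)).image r

/-- `L_i = {r_1,…,r_i}`: the `i` indices with smallest p-values. -/
def Lset {m : ℕ} (r : Fin m → Fin m) (i : ℕ) : Finset (Fin m) :=
  (Finset.univ.filter fun j : Fin m => (j : ℕ) < i).image r

/-- `h = max{0 ≤ i ≤ m : K_i ∉ 𝒰}`. -/
noncomputable def hval {m : ℕ} (α : ℝ) (p : Fin m → ℝ) (r : Fin m → Fin m) : ℕ :=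
  sSup {i | i ≤ m ∧ ¬ SimesU α p (Kset r i)}

/-- `t(S) = max{|I| : I ⊆ S, I ∉ 𝒳}`. -/
noncomputable def tval {m : ℕ} (α : ℝ) (p : Fin m → ℝ) (S : Finset (Fin m)) : ℕ :=
  sSup {k | ∃ I, I ⊆ S ∧ ¬ ClosedX α p I ∧ I.card = k}

/-- `d(S) = |S| − t(S)`. -/
noncomputable def dval {m : ℕ} (α : ℝ) (p : Fin m → ℝ) (S : Finset (Fin m)) : ℕ :=
  S.card - tval α p S

/-- `q_α(S) = t(S)/|S|` for nonempty `S`, and `0` for `S = ∅`. -/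
noncomputable def qval {m : ℕ} (α : ℝ) (p : Fin m → ℝ) (S : Finset (Fin m)) : ℝ :=
  if S = ∅ then 0 else (tval α p S : ℝ) / S.card

/-- `z = 0` if `h = m`, else `z = min{m−h ≤ i ≤ m : h·p_{(i)} ≤ (i−m+h+1)·α}`. -/
noncomputable def zval {m : ℕ} (α : ℝ) (p : Fin m → ℝ) (r : Fin m → Fin m) : ℕ :=
  if hval α p r = m then 0 else
    sInf {i | m - hval α p r ≤ i ∧ i ≤ m ∧
      (hval α p r : ℝ) * pOrd p Finset.univ i ≤ ((i : ℝ) - m + hval α p r + 1) * α}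

/-- `b_q = max{1 ≤ i ≤ m : m·p_{(i)} ≤ i·q}` (with `b_q = 0` if no such `i`). -/
noncomputable def bval {m : ℕ} (q : ℝ) (p : Fin m → ℝ) : ℕ :=
  sSup {i | 1 ≤ i ∧ i ≤ m ∧ (m : ℝ) * pOrd p Finset.univ i ≤ (i : ℝ) * q}


/-!
Since `h < m` and `h` is maximal, `K_{h+1}` is rejected by the Simes test: some `1 ≤ i ≤ h + 1`
has `(h + 1)·p_{(i:K_{h+1})} ≤ i·α`. As `K_{h+1}` consists of the `h + 1` largest p-values,
`p_{(i:K_{h+1})} = p_{(m-h-1+i)}`, and `j = m - h - 1 + i` is the required index because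
`j - m + h + 1 = i` and `h·p_{(j)} ≤ (h + 1)·p_{(j)}`.
-/

section OrderStatistics

variable {m : ℕ} (p : Fin m → ℝ)

lemma pOrd_eq_getD {I : Finset (Fin m)} {L : List ℝ} (hL : I.val.map p = L)
    (hsorted : L.Pairwise (· ≤ ·)) (i : ℕ) : pOrd p I i = L.getD (i - 1) 0 := by
  have hsort : (I.val.map p).sort (· ≤ ·) = L :=
    List.Perm.eq_of_pairwise' (Multiset.pairwise_sort _ _) hsorted
      (Multiset.coe_eq_coe.mp (by rw [Multiset.sort_eq, hL]))
  rw [pOrd, hsort]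

lemma pOrd_nonneg (hp : ∀ j, 0 ≤ p j) (I : Finset (Fin m)) (i : ℕ) : 0 ≤ pOrd p I i := by
  rw [pOrd, List.getD_eq_getElem?_getD]
  cases hx : ((I.val.map p).sort (· ≤ ·))[i - 1]? with
  | none => exact le_rfl
  | some x =>
    have hmem : x ∈ I.val.map p := by
      rw [← Multiset.mem_sort (· ≤ ·)]
      exact List.mem_of_getElem? hx
    obtain ⟨j, -, rfl⟩ := Multiset.mem_map.mp hmem
    exact hp j

end OrderStatistics

section TopSets

variable {m k : ℕ} {r : Fin m → Fin m}

lemma Kset_eq_image (hk : k ≤ m) :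
    Kset r k = univ.image fun i : Fin k => r ⟨m - k + i, by omega⟩ := by
  ext x
  simp only [Kset, mem_image, mem_filter, mem_univ, true_and]
  constructor
  · rintro ⟨j, hj, rfl⟩
    exact ⟨⟨j - (m - k), by omega⟩, by congr 1; ext; simp only; omega⟩
  · rintro ⟨i, rfl⟩
    exact ⟨_, by simp only; omega, rfl⟩

lemma Kset_self (hr : Function.Surjective r) : Kset r m = univ := by
  refine eq_univ_of_forall fun x => ?_
  obtain ⟨j, rfl⟩ := hr x
  exact mem_image_of_mem r (by simp)

lemma injective_Kset_enum (hr : Function.Injective r) (hk : k ≤ m) :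
    Function.Injective fun i : Fin k => r ⟨m - k + i, by omega⟩ := by
  intro a b hab
  have := Fin.val_eq_of_eq (hr hab)
  simp only at this
  exact Fin.ext (by omega)

lemma card_Kset (hr : Function.Injective r) (hk : k ≤ m) : (Kset r k).card = k := by
  rw [Kset_eq_image hk, card_image_of_injective _ (injective_Kset_enum hr hk), card_univ,
    Fintype.card_fin]

lemma map_Kset_val (p : Fin m → ℝ) (hr : Function.Injective r) (hk : k ≤ m) :
    (Kset r k).val.map p = ↑(List.ofFn fun i : Fin k => p (r ⟨m - k + i, by omega⟩)) := by
  rw [Kset_eq_image hk, image_val_of_injOn (injective_Kset_enum hr hk).injOn, Multiset.map_map,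
    ← Fin.univ_val_map]
  rfl

lemma pOrd_Kset (p : Fin m → ℝ) (hr : Function.Injective r) (hmono : Monotone (p ∘ r))
    (hk : k ≤ m) {i : ℕ} (hi : 1 ≤ i) (hik : i ≤ k) :
    pOrd p (Kset r k) i = p (r ⟨m - k + i - 1, by omega⟩) := by
  have hsorted :
      (List.ofFn fun j : Fin k => p (r ⟨m - k + j, by omega⟩)).Pairwise (· ≤ ·) :=
    List.pairwise_ofFn.mpr fun a b hab => hmono (Fin.mk_le_mk.mpr (by omega))
  rw [pOrd_eq_getD p (map_Kset_val p hr hk) hsorted,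
    List.getD_eq_getElem _ _ (by rw [List.length_ofFn]; omega), List.getElem_ofFn]
  congr 2
  ext
  simp only
  omega

lemma pOrd_Kset_eq_pOrd_univ (p : Fin m → ℝ) (hr : Function.Bijective r)
    (hmono : Monotone (p ∘ r)) (hk : k ≤ m) {i : ℕ} (hi : 1 ≤ i) (hik : i ≤ k) :
    pOrd p (Kset r k) i = pOrd p univ (m - k + i) := by
  rw [← Kset_self hr.surjective, pOrd_Kset p hr.injective hmono hk hi hik,
    pOrd_Kset p hr.injective hmono le_rfl (by omega) (by omega)]
  congr 3
  omega

end TopSets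

lemma simesU_Kset_hval_succ {m : ℕ} {α : ℝ} {p : Fin m → ℝ} {r : Fin m → Fin m}
    (hh : hval α p r < m) : SimesU α p (Kset r (hval α p r + 1)) := by
  by_contra hnot
  have hmem : hval α p r + 1 ∈ {i | i ≤ m ∧ ¬ SimesU α p (Kset r i)} := ⟨hh, hnot⟩
  exact Nat.not_succ_le_self _ (le_csSup ⟨m, fun _ hi => hi.1⟩ hmem)

theorem stmt5_general
    (m : ℕ) (α : ℝ)
    (p : Fin m → ℝ) (hp : ∀ i, 0 ≤ p i ∧ p i ≤ 1)
    (r : Fin m → Fin m) (hr : Function.Bijective r)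
    (hmono : ∀ i j : Fin m, i ≤ j → p (r i) ≤ p (r j))
    (hh : hval α p r < m) :
    ∃ i, m - hval α p r ≤ i ∧ i ≤ m ∧
      (hval α p r : ℝ) * pOrd p Finset.univ i ≤
        ((i : ℝ) - m + hval α p r + 1) * α := by
  set h := hval α p r
  have hk : h + 1 ≤ m := hh
  obtain ⟨i, hi, hik, hsimes⟩ := simesU_Kset_hval_succ hh
  rw [card_Kset hr.injective hk] at hik hsimes
  refine ⟨m - (h + 1) + i, by omega, by omega, ?_⟩
  have hindex : ((m - (h + 1) + i : ℕ) : ℝ) - m + h + 1 = i := by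
    push_cast [Nat.cast_sub hk]
    ring
  rw [hindex, ← pOrd_Kset_eq_pOrd_univ p hr (fun a b hab => hmono a b hab) hk hi hik]
  have hnonneg := pOrd_nonneg p (fun j => (hp j).1) (Kset r (h + 1)) i
  calc (h : ℝ) * pOrd p (Kset r (h + 1)) i
      ≤ (h + 1 : ℕ) * pOrd p (Kset r (h + 1)) i := by push_cast; nlinarith
    _ ≤ i * α := hsimes

theorem stmt5
    (m : ℕ) (hm : 1 ≤ m) (α : ℝ) (hα : 0 ≤ α ∧ α ≤ 1)
    (p : Fin m → ℝ) (hp : ∀ i, 0 ≤ p i ∧ p i ≤ 1)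
    (r : Fin m → Fin m) (hr : Function.Bijective r)
    (hmono : ∀ i j : Fin m, i ≤ j → p (r i) ≤ p (r j))
    (hh : hval α p r < m) :
    ∃ i, m - hval α p r ≤ i ∧ i ≤ m ∧
      (hval α p r : ℝ) * pOrd p Finset.univ i ≤
        ((i : ℝ) - m + hval α p r + 1) * α :=
  stmt5_general m α p hp r hr hmono hh
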